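/- Let H∈(1/2,1), set α=2−2H∈(0,1) and c_α=(1−α/2)(1−α), let λ>0, and suppose the continuous function φ:[0,1]→ℝ satisfies ∫₀¹ (∫₀ʸ∫₀ˣ (1/2)(u^{2−α}+v^{2−α}−|v−u|^{2−α}) du dv) φ(y) dy = λφ(x) for all x∈[0,1]. Define ψ(x)=∫ₓ¹∫_y¹ φ(u) du dy. Then ψ is four times differentiable on (0,1) and satisfies c_α ∫₀¹ |x−y|^{−α} ψ(y) dy = λ·ψ⁽⁴⁾(x) for all x∈(0,1), together with the boundary conditions ψ(1)=0, ψ'(1)=0, ψ''(0)=0 and ψ⁽³⁾(0)=0. -/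

import Mathlib

/-
Differentiating the eigen-equation `λ φ(x) = ∫₀¹ K(x,y) φ(y) dy` twice under the integral sign
is legitimate because `∂ₓK(x,y) = ∫₀ʸ k(x,v) dv` and `∂ₓ²K(x,y) = ∫₀ʸ ∂ₓk(x,v) dv` are jointly
continuous (`k` is the fBm covariance and `α < 1`). So `λ⁻¹ ∫₀¹ K(·,y) φ(y) dy` is a `C²`
extension of `φ` to `ℝ`, and `ψ`, whose second derivative is `φ`, extends to a `C⁴` function with
`λ ψ⁗(x) = ∫₀¹ ∂ₓ²K(x,y) φ(y) dy`. Two integrations by parts in `y`, first against `∫_y¹ φ`,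
then against `ψ`, move this derivative onto the kernel, where `∂ᵥ∂ₓk(x,v) = c_α |x - v|^{-α}`
off the diagonal is integrable. The boundary conditions come from `K(0,·) = ∂ₓK(0,·) = 0` and
the vanishing of the tail integrals at `1`.
-/

open MeasureTheory Set intervalIntegral
open scoped Interval

theorem hasDerivAt_intervalIntegral_of_continuous_deriv {E : Type*} [NormedAddCommGroup E]
    [NormedSpace ℝ E] {F F' : ℝ → ℝ → E} {a b : ℝ} (hF : ∀ x, Continuous (F x))
    (hF' : Continuous (Function.uncurry F')) (hderiv : ∀ x y, HasDerivAt (F · y) (F' x y) x)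
    (x₀ : ℝ) :
    HasDerivAt (fun x => ∫ y in a..b, F x y) (∫ y in a..b, F' x₀ y) x₀ := by
  obtain ⟨C, hC⟩ := (isCompact_closedBall x₀ 1).prod isCompact_uIcc
    |>.exists_bound_of_continuousOn (hF'.continuousOn (s := _ ×ˢ [[a, b]]))
  refine (hasDerivAt_integral_of_dominated_loc_of_deriv_le (bound := fun _ => C)
    (Metric.ball_mem_nhds x₀ one_pos) (.of_forall fun x => (hF x).aestronglyMeasurable)
    ((hF x₀).intervalIntegrable _ _) (hF'.comp (Continuous.prodMk_right x₀)).aestronglyMeasurable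
    (ae_of_all _ fun y hy x hx => hC (x, y) ⟨Metric.ball_subset_closedBall hx,
      uIoc_subset_uIcc hy⟩) intervalIntegrable_const
    (ae_of_all _ fun y _ x _ => hderiv x y)).2

theorem intervalIntegrable_abs_rpow {r : ℝ} (hr : -1 < r) (a b : ℝ) :
    IntervalIntegrable (fun t : ℝ => |t| ^ r) volume a b := by
  have hpos : ∀ c, 0 ≤ c → IntervalIntegrable (fun t : ℝ => |t| ^ r) volume 0 c := fun c hc =>
    (intervalIntegrable_rpow' hr).congr fun t ht => by
      rw [uIoc_of_le hc] at ht
      simp only [abs_of_pos ht.1]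
  have h : ∀ c, IntervalIntegrable (fun t : ℝ => |t| ^ r) volume 0 c := by
    intro c
    rcases le_total 0 c with hc | hc
    · exact hpos c hc
    · simpa using (hpos (-c) (neg_nonneg.2 hc)).comp_sub_left 0
  exact (h a).symm.trans (h b)

theorem intervalIntegrable_abs_sub_rpow {r : ℝ} (hr : -1 < r) (x a b : ℝ) :
    IntervalIntegrable (fun y : ℝ => |x - y| ^ r) volume a b := by
  simpa using (intervalIntegrable_abs_rpow hr (x - a) (x - b)).comp_sub_left x

theorem continuous_abs_rpow_mul_self {r : ℝ} (hr : -1 < r) :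
    Continuous fun t : ℝ => |t| ^ r * t := by
  have hp : 1 < r + 2 := by linarith
  have h := (contDiff_norm_rpow (E := ℝ) hp).continuous_deriv le_rfl
  rw [deriv_eq fun t => hasDerivAt_norm_rpow t hp] at h
  convert h.div_const (r + 2) using 2 with t
  simp only [Real.norm_eq_abs, add_sub_cancel_right]
  field_simp

theorem hasDerivAt_abs_rpow_mul_self {r t : ℝ} (ht : t ≠ 0) :
    HasDerivAt (fun t : ℝ => |t| ^ r * t) ((r + 1) * |t| ^ r) t := by
  refine (((hasDerivAt_abs ht).rpow_const (p := r) (Or.inl (abs_ne_zero.2 ht))).mul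
    (hasDerivAt_id t)).congr_deriv ?_
  have hsign := self_mul_sign t
  rw [Real.rpow_sub_one (abs_ne_zero.2 ht), id]
  field_simp
  linear_combination r * hsign

theorem integral_mul_deriv_eq_deriv_mul_of_hasDerivAt_of_ne {u v u' v' : ℝ → ℝ} {a b c : ℝ}
    (hac : a ≤ c) (hcb : c ≤ b) (hu : ContinuousOn u (Icc a b)) (hv : ContinuousOn v (Icc a b))
    (huu' : ∀ x ∈ Ioo a b, x ≠ c → HasDerivAt u (u' x) x)
    (hvv' : ∀ x ∈ Ioo a b, HasDerivAt v (v' x) x)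
    (hu' : IntervalIntegrable u' volume a b) (hv' : IntervalIntegrable v' volume a b) :
    ∫ x in a..b, u x * v' x = u b * v b - u a * v a - ∫ x in a..b, u' x * v x := by
  rw [← uIcc_of_le (hac.trans hcb)] at hu hv
  have ibp {p q : ℝ} (hap : a ≤ p) (hpq : p ≤ q) (hqb : q ≤ b)
      (hderiv : ∀ x ∈ Ioo p q, HasDerivAt u (u' x) x) :
      ∫ x in p..q, u x * v' x = u q * v q - u p * v p - ∫ x in p..q, u' x * v x := by
    have hsub : [[p, q]] ⊆ [[a, b]] := by
      rw [uIcc_of_le hpq, uIcc_of_le (hac.trans hcb)]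
      exact Icc_subset_Icc hap hqb
    refine integral_mul_deriv_eq_deriv_mul_of_hasDerivAt (hu.mono hsub) (hv.mono hsub) ?_ ?_
      (hu'.mono_set hsub) (hv'.mono_set hsub) <;> rw [min_eq_left hpq, max_eq_right hpq]
    · exact hderiv
    · exact fun x hx => hvv' x ⟨hap.trans_lt hx.1, hx.2.trans_le hqb⟩
  have huv' : IntervalIntegrable (fun x => u x * v' x) volume a b := hv'.continuousOn_mul hu
  have hu'v : IntervalIntegrable (fun x => u' x * v x) volume a b := hu'.mul_continuousOn hv
  have hc : c ∈ [[a, b]] := by rw [uIcc_of_le (hac.trans hcb)]; exact ⟨hac, hcb⟩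
  rw [← integral_add_adjacent_intervals (huv'.mono_set (uIcc_subset_uIcc_left hc))
      (huv'.mono_set (uIcc_subset_uIcc_right hc)),
    ← integral_add_adjacent_intervals (hu'v.mono_set (uIcc_subset_uIcc_left hc))
      (hu'v.mono_set (uIcc_subset_uIcc_right hc)),
    ibp le_rfl hac hcb fun x hx => huu' x ⟨hx.1, hx.2.trans_le hcb⟩ hx.2.ne,
    ibp hac hcb le_rfl fun x hx => huu' x ⟨hac.trans_lt hx.1, hx.2⟩ hx.1.ne']
  ring

theorem contDiff_succ_of_hasDerivAt {f f' : ℝ → ℝ} {n : ℕ} (hf : ∀ x, HasDerivAt f (f' x) x)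
    (hf' : ContDiff ℝ n f') : ContDiff ℝ (n + 1) f :=
  contDiff_succ_iff_deriv.2 ⟨fun x => (hf x).differentiableAt, by simp, by rwa [deriv_eq hf]⟩

theorem iteratedDeriv_succ_of_hasDerivAt {f f' : ℝ → ℝ} {n : ℕ}
    (hf : ∀ x, HasDerivAt f (f' x) x) : iteratedDeriv (n + 1) f = iteratedDeriv n f' := by
  rw [iteratedDeriv_succ', deriv_eq hf]

theorem iteratedDerivWithin_eq_iteratedDeriv_of_eqOn {f g : ℝ → ℝ} {s : Set ℝ}
    {n : WithTop ℕ∞} {m : ℕ} {x : ℝ} (hs : UniqueDiffOn ℝ s) (hfg : EqOn f g s)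
    (hg : ContDiff ℝ n g) (hm : m ≤ n) (hx : x ∈ s) :
    iteratedDerivWithin m f s x = iteratedDeriv m g x := by
  rw [iteratedDerivWithin_congr hfg hx,
    iteratedDerivWithin_eq_iteratedDeriv hs (hg.contDiffAt.of_le hm) hx]

noncomputable def tailIntegral (f : ℝ → ℝ) (x : ℝ) : ℝ := ∫ y in x..1, f y

section TailIntegral

variable {f g : ℝ → ℝ}

theorem hasDerivAt_tailIntegral (hf : Continuous f) (x : ℝ) :
    HasDerivAt (tailIntegral f) (-f x) x :=
  integral_hasDerivAt_left (hf.intervalIntegrable _ _) (hf.stronglyMeasurableAtFilter _ _)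
    hf.continuousAt

theorem continuous_tailIntegral (hf : Continuous f) : Continuous (tailIntegral f) :=
  continuous_iff_continuousAt.2 fun x => (hasDerivAt_tailIntegral hf x).continuousAt

@[simp] theorem tailIntegral_one : tailIntegral f 1 = 0 := integral_same

theorem tailIntegral_congr {a : ℝ} (hfg : EqOn f g (Icc a 1)) :
    EqOn (tailIntegral f) (tailIntegral g) (Icc a 1) := fun x hx =>
  integral_congr fun y hy => by
    rw [uIcc_of_le hx.2] at hy
    exact hfg ⟨hx.1.trans hy.1, hy.2⟩

theorem iteratedDeriv_add_two_tailIntegral_tailIntegral (hf : Continuous f) (n : ℕ) :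
    iteratedDeriv (n + 2) (tailIntegral (tailIntegral f)) = iteratedDeriv n f := by
  rw [iteratedDeriv_succ_of_hasDerivAt (hasDerivAt_tailIntegral (continuous_tailIntegral hf)),
    iteratedDeriv_succ_of_hasDerivAt (f := fun x => -tailIntegral f x)
      fun x => (hasDerivAt_tailIntegral hf x).neg]
  simp only [neg_neg]

theorem contDiff_tailIntegral_tailIntegral {n : ℕ} (hf : ContDiff ℝ n f) :
    ContDiff ℝ (n + 2) (tailIntegral (tailIntegral f)) := by
  have h := contDiff_succ_of_hasDerivAt (n := n + 1)
    (hasDerivAt_tailIntegral (continuous_tailIntegral hf.continuous))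
    (contDiff_succ_of_hasDerivAt (fun x => (hasDerivAt_tailIntegral hf.continuous x).neg)
      (by simpa only [neg_neg] using hf))
  exact_mod_cast h

theorem integral_primitive_mul_eq_integral_mul_tailIntegral (hg : Continuous g)
    (hf : Continuous f) :
    ∫ y in (0 : ℝ)..1, (∫ v in (0 : ℝ)..y, g v) * f y =
      ∫ y in (0 : ℝ)..1, g y * tailIntegral f y := by
  have h := integral_mul_deriv_eq_deriv_mul (a := 0) (b := 1)
    (fun y _ => (hg.integral_hasStrictDerivAt 0 y).hasDerivAt)
    (fun y _ => hasDerivAt_tailIntegral hf y) (hg.intervalIntegrable _ _)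
    (hf.neg.intervalIntegrable _ _)
  simp only [mul_neg, intervalIntegral.integral_neg, tailIntegral_one, integral_same] at h
  linarith

end TailIntegral

noncomputable def integralOp (K : ℝ → ℝ → ℝ) (f : ℝ → ℝ) (x : ℝ) : ℝ :=
  ∫ y in (0 : ℝ)..1, K x y * f y

section IntegralOp

variable {K K' : ℝ → ℝ → ℝ} {f g : ℝ → ℝ}

theorem integralOp_congr (hfg : EqOn f g (Icc 0 1)) : integralOp K f = integralOp K g :=
  funext fun _ => integral_congr fun y hy => by
    rw [uIcc_of_le zero_le_one] at hy
    simp only [hfg hy]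

theorem integralOp_eq_zero {x : ℝ} (hK : ∀ y ∈ Icc (0 : ℝ) 1, K x y = 0) :
    integralOp K f x = 0 := by
  have h : EqOn (fun y => K x y * f y) 0 [[0, 1]] := fun y hy => by
    rw [uIcc_of_le zero_le_one] at hy
    simp [hK y hy]
  simp [integralOp, integral_congr h]

theorem hasDerivAt_integralOp (hK : ∀ x, Continuous (K x))
    (hK' : Continuous (Function.uncurry K')) (hderiv : ∀ x y, HasDerivAt (K · y) (K' x y) x)
    (hf : Continuous f) (x : ℝ) : HasDerivAt (integralOp K f) (integralOp K' f x) x :=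
  hasDerivAt_intervalIntegral_of_continuous_deriv (F' := fun x y => K' x y * f y)
    (fun x => (hK x).mul hf) (hK'.mul (hf.comp continuous_snd))
    (fun x y => (hderiv x y).mul_const (f y)) x

theorem continuous_integralOp (hK : Continuous (Function.uncurry K)) (hf : Continuous f) :
    Continuous (integralOp K f) :=
  continuous_parametric_intervalIntegral_of_continuous' (hK.mul (hf.comp continuous_snd)) 0 1

end IntegralOp

noncomputable def fbmCov (α u v : ℝ) : ℝ :=
  1 / 2 * (u ^ (2 - α) + v ^ (2 - α) - |v - u| ^ (2 - α))

-- `|t| ^ (-α) * t` is the odd power `sign t * |t| ^ (1 - α)`.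
noncomputable def fbmCovDeriv (α u v : ℝ) : ℝ :=
  (1 - α / 2) * (u ^ (1 - α) - |u - v| ^ (-α) * (u - v))

noncomputable def ifbmCov (α x y : ℝ) : ℝ := ∫ v in (0 : ℝ)..y, ∫ u in (0 : ℝ)..x, fbmCov α u v

noncomputable def ifbmCovDeriv (α x y : ℝ) : ℝ := ∫ v in (0 : ℝ)..y, fbmCov α x v

noncomputable def ifbmCovDeriv2 (α x y : ℝ) : ℝ := ∫ v in (0 : ℝ)..y, fbmCovDeriv α x v

section Kernel

variable {α : ℝ}

theorem continuous_fbmCov (hα : α ≤ 2) : Continuous (Function.uncurry (fbmCov α)) := by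
  have h := Real.continuous_rpow_const (sub_nonneg.2 hα)
  unfold fbmCov
  fun_prop

theorem continuous_fbmCovDeriv (hα : α < 1) :
    Continuous (Function.uncurry (fbmCovDeriv α)) := by
  have h := Real.continuous_rpow_const (sub_nonneg.2 hα.le)
  have h' := continuous_abs_rpow_mul_self (neg_lt_neg hα)
  exact continuous_const.mul
    ((h.comp continuous_fst).sub (h'.comp (continuous_fst.sub continuous_snd)))

theorem hasDerivAt_fbmCov (hα : α < 1) (u v : ℝ) :
    HasDerivAt (fbmCov α · v) (fbmCovDeriv α u v) u := by
  have hpow := Real.hasDerivAt_rpow_const (x := u) (p := 2 - α) (Or.inr (by linarith))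
  have habs := (hasDerivAt_abs_rpow (v - u) (p := 2 - α) (by linarith)).comp u
    ((hasDerivAt_id u).const_sub v)
  refine (((hpow.add_const _).sub habs).const_mul (1 / 2)).congr_deriv ?_
  rw [fbmCovDeriv, show 2 - α - 1 = 1 - α by ring, show 2 - α - 2 = -α by ring, abs_sub_comm]
  ring

theorem hasDerivAt_fbmCovDeriv_snd {x v : ℝ} (hxv : v ≠ x) :
    HasDerivAt (fbmCovDeriv α x ·) ((1 - α / 2) * (1 - α) * |x - v| ^ (-α)) v := by
  have h := (hasDerivAt_abs_rpow_mul_self (r := -α) (sub_ne_zero.2 hxv.symm)).comp v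
    ((hasDerivAt_id v).const_sub x)
  refine ((h.const_sub (x ^ (1 - α))).const_mul (1 - α / 2)).congr_deriv ?_
  ring

theorem fbmCov_zero_left (hα : α < 2) {v : ℝ} (hv : 0 ≤ v) : fbmCov α 0 v = 0 := by
  rw [fbmCov, Real.zero_rpow (by linarith), sub_zero, abs_of_nonneg hv]
  ring

theorem fbmCovDeriv_zero_right {x : ℝ} (hx : 0 < x) : fbmCovDeriv α x 0 = 0 := by
  rw [fbmCovDeriv, sub_zero, abs_of_pos hx, sub_eq_add_neg 1 α, add_comm,
    Real.rpow_add_one hx.ne']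
  ring

theorem continuous_ifbmCovDeriv (hα : α ≤ 2) :
    Continuous (Function.uncurry (ifbmCovDeriv α)) :=
  continuous_parametric_primitive_of_continuous (continuous_fbmCov hα)

theorem continuous_ifbmCovDeriv2 (hα : α < 1) :
    Continuous (Function.uncurry (ifbmCovDeriv2 α)) :=
  continuous_parametric_primitive_of_continuous (continuous_fbmCovDeriv hα)

theorem continuous_integral_fbmCov_fst (hα : α ≤ 2) (x : ℝ) :
    Continuous fun v => ∫ u in (0 : ℝ)..x, fbmCov α u v :=
  continuous_parametric_intervalIntegral_of_continuous' (f := fun v u => fbmCov α u v)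
    ((continuous_fbmCov hα).comp continuous_swap) 0 x

theorem continuous_ifbmCov_snd (hα : α ≤ 2) (x : ℝ) : Continuous (ifbmCov α x) :=
  continuous_primitive
    (fun _ _ => (continuous_integral_fbmCov_fst hα x).intervalIntegrable _ _) 0

theorem hasDerivAt_ifbmCov_fst (hα : α ≤ 2) (x y : ℝ) :
    HasDerivAt (ifbmCov α · y) (ifbmCovDeriv α x y) x :=
  hasDerivAt_intervalIntegral_of_continuous_deriv (continuous_integral_fbmCov_fst hα)
    (continuous_fbmCov hα) (fun x v =>
      (((continuous_fbmCov hα).uncurry_right v).integral_hasStrictDerivAt 0 x).hasDerivAt) x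

theorem hasDerivAt_ifbmCovDeriv_fst (hα : α < 1) (x y : ℝ) :
    HasDerivAt (ifbmCovDeriv α · y) (ifbmCovDeriv2 α x y) x :=
  hasDerivAt_intervalIntegral_of_continuous_deriv
    (fun x => (continuous_fbmCov (by linarith)).uncurry_left x) (continuous_fbmCovDeriv hα)
    (hasDerivAt_fbmCov hα) x

theorem ifbmCovDeriv_zero_left (hα : α < 2) {y : ℝ} (hy : 0 ≤ y) :
    ifbmCovDeriv α 0 y = 0 := by
  have h : EqOn (fbmCov α 0) 0 [[0, y]] := fun v hv => by
    rw [uIcc_of_le hy] at hv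
    exact fbmCov_zero_left hα hv.1
  simp [ifbmCovDeriv, integral_congr h]

section Operators

variable {f : ℝ → ℝ}

theorem hasDerivAt_integralOp_ifbmCov (hα : α < 1) (hf : Continuous f) (x : ℝ) :
    HasDerivAt (integralOp (ifbmCov α) f) (integralOp (ifbmCovDeriv α) f x) x :=
  hasDerivAt_integralOp (continuous_ifbmCov_snd (by linarith))
    (continuous_ifbmCovDeriv (by linarith)) (hasDerivAt_ifbmCov_fst (by linarith)) hf x

theorem hasDerivAt_integralOp_ifbmCovDeriv (hα : α < 1) (hf : Continuous f) (x : ℝ) :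
    HasDerivAt (integralOp (ifbmCovDeriv α) f) (integralOp (ifbmCovDeriv2 α) f x) x :=
  hasDerivAt_integralOp (fun x => (continuous_ifbmCovDeriv (by linarith)).uncurry_left x)
    (continuous_ifbmCovDeriv2 hα) (hasDerivAt_ifbmCovDeriv_fst hα) hf x

theorem integralOp_ifbmCovDeriv2_eq (hα : α < 1) (hf : Continuous f) {x : ℝ}
    (hx : x ∈ Ioo (0 : ℝ) 1) :
    integralOp (ifbmCovDeriv2 α) f x =
      (1 - α / 2) * (1 - α) *
        ∫ y in (0 : ℝ)..1, |x - y| ^ (-α) * tailIntegral (tailIntegral f) y := by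
  have hk := (continuous_fbmCovDeriv hα).uncurry_left x
  have hg := continuous_tailIntegral hf
  have hibp := integral_mul_deriv_eq_deriv_mul_of_hasDerivAt_of_ne hx.1.le hx.2.le
    hk.continuousOn (continuous_tailIntegral hg).continuousOn
    (fun y _ hy => hasDerivAt_fbmCovDeriv_snd hy) (fun y _ => hasDerivAt_tailIntegral hg y)
    ((intervalIntegrable_abs_sub_rpow (neg_lt_neg hα) x 0 1).const_mul _)
    (hg.neg.intervalIntegrable _ _)
  simp only [mul_neg, intervalIntegral.integral_neg, tailIntegral_one,
    fbmCovDeriv_zero_right hx.1, mul_zero, zero_mul, sub_zero, zero_sub, neg_inj, mul_assoc,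
    intervalIntegral.integral_const_mul] at hibp
  rw [mul_assoc, ← hibp]
  exact integral_primitive_mul_eq_integral_mul_tailIntegral hk hf

end Operators

section Eigenfunction

variable {lam : ℝ} {χ : ℝ → ℝ}

theorem exists_continuous_eigenfunction_extension (hα : α < 1) (hlam : lam ≠ 0) {φ : ℝ → ℝ}
    (hφ : ContinuousOn φ (Icc 0 1))
    (heig : ∀ x ∈ Icc (0 : ℝ) 1, integralOp (ifbmCov α) φ x = lam * φ x) :
    ∃ χ : ℝ → ℝ, Continuous χ ∧ EqOn χ φ (Icc 0 1) ∧
      ∀ x, integralOp (ifbmCov α) χ x = lam * χ x := by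
  have hχφ : EqOn (fun x => integralOp (ifbmCov α) φ x / lam) φ (Icc 0 1) := fun x hx => by
    simp only [heig x hx, mul_div_cancel_left₀ _ hlam]
  refine ⟨fun x => integralOp (ifbmCov α) φ x / lam, ?_, hχφ, fun x => ?_⟩
  · rw [← integralOp_congr fun x hx =>
      IccExtend_of_mem zero_le_one ((Icc 0 1).domRestrict φ) hx]
    exact (continuous_iff_continuousAt.2 fun x =>
      (hasDerivAt_integralOp_ifbmCov hα hφ.domRestrict.Icc_extend' x).continuousAt).div_const lam
  · rw [integralOp_congr hχφ, mul_div_cancel₀ _ hlam]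

theorem eigenfunction_zero (hlam : lam ≠ 0)
    (heig : ∀ x, integralOp (ifbmCov α) χ x = lam * χ x) : χ 0 = 0 := by
  have h := heig 0
  rw [integralOp_eq_zero (fun y _ => by simp [ifbmCov])] at h
  exact (mul_eq_zero.1 h.symm).resolve_left hlam

theorem hasDerivAt_eigenfunction (hα : α < 1) (hlam : lam ≠ 0) (hχ : Continuous χ)
    (heig : ∀ x, integralOp (ifbmCov α) χ x = lam * χ x) (x : ℝ) :
    HasDerivAt χ (integralOp (ifbmCovDeriv α) χ x / lam) x :=
  ((hasDerivAt_integralOp_ifbmCov hα hχ x).div_const lam).congr_of_eventuallyEq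
    (.of_forall fun y => by simp only [heig, mul_div_cancel_left₀ _ hlam])

theorem contDiff_two_eigenfunction (hα : α < 1) (hlam : lam ≠ 0) (hχ : Continuous χ)
    (heig : ∀ x, integralOp (ifbmCov α) χ x = lam * χ x) : ContDiff ℝ 2 χ :=
  contDiff_succ_of_hasDerivAt (n := 1) (hasDerivAt_eigenfunction hα hlam hχ heig)
    (contDiff_succ_of_hasDerivAt (n := 0)
      (fun x => (hasDerivAt_integralOp_ifbmCovDeriv hα hχ x).div_const lam)
      (contDiff_zero.2 ((continuous_integralOp (continuous_ifbmCovDeriv2 hα) hχ).div_const lam)))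

theorem iteratedDeriv_one_eigenfunction (hα : α < 1) (hlam : lam ≠ 0) (hχ : Continuous χ)
    (heig : ∀ x, integralOp (ifbmCov α) χ x = lam * χ x) (x : ℝ) :
    iteratedDeriv 1 χ x = integralOp (ifbmCovDeriv α) χ x / lam := by
  rw [iteratedDeriv_one, deriv_eq (hasDerivAt_eigenfunction hα hlam hχ heig)]

theorem iteratedDeriv_two_eigenfunction (hα : α < 1) (hlam : lam ≠ 0) (hχ : Continuous χ)
    (heig : ∀ x, integralOp (ifbmCov α) χ x = lam * χ x) (x : ℝ) :
    iteratedDeriv 2 χ x = integralOp (ifbmCovDeriv2 α) χ x / lam := by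
  rw [iteratedDeriv_succ_of_hasDerivAt (hasDerivAt_eigenfunction hα hlam hχ heig),
    iteratedDeriv_one,
    deriv_eq fun x => (hasDerivAt_integralOp_ifbmCovDeriv hα hχ x).div_const lam]

theorem mul_iteratedDeriv_four_tailIntegral_tailIntegral (hα : α < 1) (hlam : lam ≠ 0)
    (hχ : Continuous χ) (heig : ∀ x, integralOp (ifbmCov α) χ x = lam * χ x) {x : ℝ}
    (hx : x ∈ Ioo (0 : ℝ) 1) :
    lam * iteratedDeriv 4 (tailIntegral (tailIntegral χ)) x =
      (1 - α / 2) * (1 - α) *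
        ∫ y in (0 : ℝ)..1, |x - y| ^ (-α) * tailIntegral (tailIntegral χ) y := by
  rw [iteratedDeriv_add_two_tailIntegral_tailIntegral hχ 2,
    iteratedDeriv_two_eigenfunction hα hlam hχ heig, mul_div_cancel₀ _ hlam,
    integralOp_ifbmCovDeriv2_eq hα hχ hx]

end Eigenfunction

end Kernel

/-- **Reduction of the integrated fractional Brownian motion eigenproblem
(`H > 1/2`, i.e. `α ∈ (0,1)`) to a generalized eigenproblem.** If `φ` solves
`∫₀¹ (∫₀ʸ∫₀ˣ ½(u^{2-α}+v^{2-α}-|v-u|^{2-α}) du dv) φ(y) dy = λ φ(x)` on `[0,1]`,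
then `ψ(x) = ∫ₓ¹∫_y¹ φ(u) du dy` is four times differentiable on `(0,1)`,
satisfies `c_α ∫₀¹ |x-y|^{-α} ψ(y) dy = λ ψ⁗(x)` there, and obeys the boundary
conditions `ψ(1) = 0`, `ψ'(1) = 0`, `ψ''(0) = 0`, `ψ'''(0) = 0`. -/
theorem ifbm_generalized_eigenproblem_large_H
    (H : ℝ) (hH : H ∈ Set.Ioo (1 / 2 : ℝ) 1)
    (α : ℝ) (hα : α = 2 - 2 * H)
    (cα : ℝ) (hcα : cα = (1 - α / 2) * (1 - α))
    (lam : ℝ) (hlam : 0 < lam)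
    (φ : ℝ → ℝ) (hφcont : ContinuousOn φ (Set.Icc 0 1))
    (hφeig : ∀ x ∈ Set.Icc (0 : ℝ) 1,
      ∫ y in (0 : ℝ)..1,
        (∫ v in (0 : ℝ)..y, ∫ u in (0 : ℝ)..x,
          (1 / 2) * (u ^ (2 - α) + v ^ (2 - α) - |v - u| ^ (2 - α))) *
        φ y = lam * φ x)
    (ψ : ℝ → ℝ)
    (hψ : ∀ x, ψ x = ∫ y in x..1, ∫ u in y..1, φ u) :
    ContDiffOn ℝ 4 ψ (Set.Ioo 0 1) ∧
    (∀ x ∈ Set.Ioo (0 : ℝ) 1,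
      cα * ∫ y in (0 : ℝ)..1, |x - y| ^ (-α) * ψ y =
        lam * iteratedDerivWithin 4 ψ (Set.Ioo 0 1) x) ∧
    ψ 1 = 0 ∧
    derivWithin ψ (Set.Icc 0 1) 1 = 0 ∧
    iteratedDerivWithin 2 ψ (Set.Icc 0 1) 0 = 0 ∧
    iteratedDerivWithin 3 ψ (Set.Icc 0 1) 0 = 0 := by
  subst hcα
  have hα1 : α < 1 := by rw [hα]; linarith [hH.1]
  obtain ⟨χ, hχ, hχφ, heig⟩ :=
    exists_continuous_eigenfunction_extension hα1 hlam.ne' hφcont hφeig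
  have hψΨ : EqOn ψ (tailIntegral (tailIntegral χ)) (Icc 0 1) := fun x hx => by
    rw [hψ]; exact tailIntegral_congr (tailIntegral_congr hχφ.symm) hx
  have hΨ : ContDiff ℝ 4 (tailIntegral (tailIntegral χ)) :=
    contDiff_tailIntegral_tailIntegral (n := 2) (contDiff_two_eigenfunction hα1 hlam.ne' hχ heig)
  have hIcc {m : ℕ} {x : ℝ} := iteratedDerivWithin_eq_iteratedDeriv_of_eqOn (m := m) (x := x)
    (uniqueDiffOn_Icc one_pos) hψΨ hΨ
  refine ⟨hΨ.contDiffOn.congr fun x hx => hψΨ (Ioo_subset_Icc_self hx), fun x hx => ?_,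
    by rw [hψ]; exact integral_same, ?_, ?_, ?_⟩
  · rw [iteratedDerivWithin_eq_iteratedDeriv_of_eqOn isOpen_Ioo.uniqueDiffOn
      (hψΨ.mono Ioo_subset_Icc_self) hΨ le_rfl hx,
      mul_iteratedDeriv_four_tailIntegral_tailIntegral hα1 hlam.ne' hχ heig hx]
    exact congrArg _ (integral_congr fun y hy => by
      rw [hψΨ (by rwa [uIcc_of_le zero_le_one] at hy)])
  · rw [← iteratedDerivWithin_one, hIcc (by norm_num) (right_mem_Icc.2 zero_le_one),
      iteratedDeriv_one, (hasDerivAt_tailIntegral (continuous_tailIntegral hχ) 1).deriv,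
      tailIntegral_one, neg_zero]
  · rw [hIcc (by norm_num) (left_mem_Icc.2 zero_le_one),
      iteratedDeriv_add_two_tailIntegral_tailIntegral hχ 0, iteratedDeriv_zero,
      eigenfunction_zero hlam.ne' heig]
  · rw [hIcc (by norm_num) (left_mem_Icc.2 zero_le_one),
      iteratedDeriv_add_two_tailIntegral_tailIntegral hχ 1,
      iteratedDeriv_one_eigenfunction hα1 hlam.ne' hχ heig,
      integralOp_eq_zero fun y hy => ifbmCovDeriv_zero_left (hα1.trans one_lt_two) hy.1, zero_div]
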